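/- Suppose a graph G with orientation O admits an integer-valued 2-flow φ₂ (i.e. |φ₂(e)| ≤ 1 for all edges and Kirchhoff's law holds) and an integer-valued 3-flow φ₃ (|φ₃(e)| ≤ 2, Kirchhoff's law) such that for every edge e, φ₂(e) ≠ 0 or φ₃(e) ≠ 0. Then the assignment φ(e) = (φ₂(e), φ₃(e)) ∈ ℝ² is a (1+√5, 2)-NZF on G: Kirchhoff's law holds at every vertex and 1 ≤ ‖φ(e)‖ ≤ √5 for every edge e. -/

import Mathlib

open scoped BigOperators

noncomputable section

/-- The vector `(x, y)` in the Euclidean plane `ℝ²`. -/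
def vec2 (x y : ℝ) : EuclideanSpace ℝ (Fin 2) := (WithLp.equiv 2 (Fin 2 → ℝ)).symm ![x, y]

/-- `f` is a `d`-dimensional nowhere-zero `r`-flow ((r,d)-NZF) on the graph `G`.
We encode an orientation together with a flow as a skew-symmetric function on ordered
pairs of vertices, supported on adjacent pairs, whose values (on edges) have Euclidean
norm in `[1, r-1]`, and which satisfies Kirchhoff's law at every vertex. -/
def IsNZF {V : Type} [Fintype V] (G : SimpleGraph V) (d : ℕ) (r : ℝ)
    (f : V → V → EuclideanSpace ℝ (Fin d)) : Prop :=
  (∀ u v, f u v = - f v u) ∧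
  (∀ u v, ¬ G.Adj u v → f u v = 0) ∧
  (∀ u v, G.Adj u v → 1 ≤ ‖f u v‖ ∧ ‖f u v‖ ≤ r - 1) ∧
  (∀ v, ∑ u, f v u = 0)

/-- `G` admits an `(r,d)`-NZF. -/
def HasNZF {V : Type} [Fintype V] (G : SimpleGraph V) (d : ℕ) (r : ℝ) : Prop :=
  ∃ f, IsNZF G d r f

/-- A graph is bridgeless if none of its edges is a bridge. -/
def Bridgeless {V : Type} (G : SimpleGraph V) : Prop :=
  ∀ e ∈ G.edgeSet, ¬ G.IsBridge e

theorem vec2_zero : vec2 0 0 = 0 := by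
  ext i
  fin_cases i <;> simp [vec2]

theorem vec2_neg (x y : ℝ) : vec2 (-x) (-y) = -vec2 x y := by
  ext i
  fin_cases i <;> simp [vec2]

theorem sum_vec2 {ι : Type*} (s : Finset ι) (x y : ι → ℝ) :
    ∑ i ∈ s, vec2 (x i) (y i) = vec2 (∑ i ∈ s, x i) (∑ i ∈ s, y i) := by
  ext j
  rw [WithLp.ofLp_sum, Finset.sum_apply]
  fin_cases j <;> simp [vec2]

theorem norm_vec2 (x y : ℝ) : ‖vec2 x y‖ = √(x ^ 2 + y ^ 2) := by
  simp [EuclideanSpace.norm_eq, vec2, Fin.sum_univ_two]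

theorem norm_vec2_le {x y a b : ℝ} (hx : |x| ≤ a) (hy : |y| ≤ b) :
    ‖vec2 x y‖ ≤ √(a ^ 2 + b ^ 2) := by
  rw [norm_vec2]
  exact Real.sqrt_le_sqrt <| add_le_add (sq_le_sq' (abs_le.mp hx).1 (abs_le.mp hx).2)
    (sq_le_sq' (abs_le.mp hy).1 (abs_le.mp hy).2)

theorem one_le_norm_vec2_intCast {m n : ℤ} (h : m ≠ 0 ∨ n ≠ 0) : 1 ≤ ‖vec2 m n‖ := by
  have hsq : (1 : ℤ) ≤ m ^ 2 + n ^ 2 := by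
    rcases h with h | h
    · exact le_add_of_le_of_nonneg (one_le_sq_iff_one_le_abs m |>.mpr (Int.one_le_abs h)) (sq_nonneg n)
    · exact le_add_of_nonneg_of_le (sq_nonneg m) (one_le_sq_iff_one_le_abs n |>.mpr (Int.one_le_abs h))
  rw [norm_vec2, Real.one_le_sqrt]
  exact_mod_cast hsq

/-- If a graph `G` has an integer 2-flow `φ₂` and an integer 3-flow `φ₃` (both encoded as
skew-symmetric functions supported on edges and satisfying Kirchhoff's law) such that on
every edge at least one of them is nonzero, then `e ↦ (φ₂ e, φ₃ e) ∈ ℝ²` is a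
`(1+√5, 2)`-NZF on `G`. -/
theorem stmt_4 {V : Type} [Fintype V] (G : SimpleGraph V) (φ₂ φ₃ : V → V → ℤ)
    (hskew₂ : ∀ u v, φ₂ u v = - φ₂ v u) (hskew₃ : ∀ u v, φ₃ u v = - φ₃ v u)
    (hsupp₂ : ∀ u v, ¬ G.Adj u v → φ₂ u v = 0) (hsupp₃ : ∀ u v, ¬ G.Adj u v → φ₃ u v = 0)
    (hbd₂ : ∀ u v, |φ₂ u v| ≤ 1) (hbd₃ : ∀ u v, |φ₃ u v| ≤ 2)
    (hK₂ : ∀ v, ∑ u, φ₂ v u = 0) (hK₃ : ∀ v, ∑ u, φ₃ v u = 0)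
    (hnz : ∀ u v, G.Adj u v → φ₂ u v ≠ 0 ∨ φ₃ u v ≠ 0) :
    IsNZF G 2 (1 + Real.sqrt 5) (fun u v => vec2 (φ₂ u v) (φ₃ u v)) := by
  refine ⟨fun u v => ?skew, fun u v h => ?supp, fun u v h => ⟨?lower, ?upper⟩, fun v => ?kirchhoff⟩
  case skew => simp only [hskew₂ u v, hskew₃ u v, Int.cast_neg, vec2_neg]
  case supp => simp only [hsupp₂ u v h, hsupp₃ u v h, Int.cast_zero, vec2_zero]
  case lower => exact one_le_norm_vec2_intCast (hnz u v h)
  case upper =>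
    calc ‖vec2 (φ₂ u v) (φ₃ u v)‖
        ≤ √(1 ^ 2 + 2 ^ 2) := norm_vec2_le (by exact_mod_cast hbd₂ u v) (by exact_mod_cast hbd₃ u v)
      _ = 1 + √5 - 1 := by norm_num
  case kirchhoff =>
    have hK₂' : ∑ u, (φ₂ v u : ℝ) = 0 := by exact_mod_cast hK₂ v
    have hK₃' : ∑ u, (φ₃ v u : ℝ) = 0 := by exact_mod_cast hK₃ v
    rw [sum_vec2, hK₂', hK₃', vec2_zero]
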